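/- Let C ⊆ (ℤ/2)^n be a binary linear code that is doubly even and self-dual. Then the Construction A lattice L_C is an even self-dual (unimodular) lattice in ℝ^n: for every x ∈ L_C the squared norm ⟨x,x⟩ is an even integer, and L_C equals its dual lattice {y ∈ ℝ^n : ⟨x,y⟩ ∈ ℤ for all x ∈ L_C}. -/
import Mathlib


open Finset

/-- The Hamming weight of a binary word: the number of nonzero entries. -/
def wt {n : ℕ} (c : Fin n → ZMod 2) : ℕ := (Finset.univ.filter fun i => c i ≠ 0).card

/-- The dual code `C⊥ = {v : ∑_i v_i c_i = 0 for all c ∈ C}`. -/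
def dualSet (n : ℕ) (C : Submodule (ZMod 2) (Fin n → ZMod 2)) : Set (Fin n → ZMod 2) :=
  {v | ∀ c ∈ C, ∑ i, v i * c i = 0}

/-- The Construction A lattice
`L_C = { x ∈ ℝ^n : √2·x has integer coordinates whose mod-2 reduction lies in C }`. -/
def latticeA (n : ℕ) (C : Submodule (ZMod 2) (Fin n → ZMod 2)) : Set (Fin n → ℝ) :=
  {x | ∃ v : Fin n → ℤ, (∀ i, Real.sqrt 2 * x i = (v i : ℝ)) ∧
    (fun i => ((v i : ZMod 2))) ∈ C}

lemma sum_sq_sub_card {n : ℕ} (v : Fin n → ℤ) :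
    (4:ℤ) ∣ (∑ i, v i * v i) -
      ((Finset.univ.filter fun i => ((v i : ZMod 2)) ≠ 0).card : ℤ) := by
  have hcard : ((Finset.univ.filter fun i => ((v i : ZMod 2)) ≠ 0).card : ℤ)
      = ∑ i, (if ((v i : ZMod 2)) ≠ 0 then (1:ℤ) else 0) := by
    simp [Finset.card_filter]
  rw [hcard, ← Finset.sum_sub_distrib]
  apply Finset.dvd_sum
  intro i _
  by_cases h : ((v i : ZMod 2)) = 0
  · have h2 : (2:ℤ) ∣ v i := (ZMod.intCast_zmod_eq_zero_iff_dvd _ 2).mp h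
    obtain ⟨k, hk⟩ := h2
    simp only [h, ne_eq, not_true_eq_false, if_false, sub_zero]
    exact ⟨k * k, by rw [hk]; ring⟩
  · have h2 : ¬ (2:ℤ) ∣ v i := fun hd => h ((ZMod.intCast_zmod_eq_zero_iff_dvd _ 2).mpr hd)
    obtain ⟨k, hk⟩ : ∃ k, v i = 2 * k + 1 := ⟨v i / 2, by omega⟩
    simp only [h, ne_eq, not_false_eq_true, if_true]
    exact ⟨k * k + k, by rw [hk]; ring⟩

/-- If `C ⊆ (ℤ/2)^n` is a doubly even self-dual binary linear code, then the
Construction A lattice `L_C` is an even self-dual (unimodular) lattice in `ℝ^n`: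
every `x ∈ L_C` has even integer squared norm, and `L_C` equals its dual lattice. -/
theorem constructionA_even_selfdual (n : ℕ) (C : Submodule (ZMod 2) (Fin n → ZMod 2))
    (hde : ∀ c ∈ C, 4 ∣ wt c)
    (hsd : (C : Set (Fin n → ZMod 2)) = dualSet n C) :
    (∀ x ∈ latticeA n C, ∃ m : ℤ, ∑ i, x i * x i = 2 * (m : ℝ)) ∧
    latticeA n C =
      {y : Fin n → ℝ | ∀ x ∈ latticeA n C, ∃ m : ℤ, ∑ i, x i * y i = (m : ℝ)} := by
  have hs2 : Real.sqrt 2 * Real.sqrt 2 = 2 := Real.mul_self_sqrt (by norm_num)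
  have hs2ne : Real.sqrt 2 ≠ 0 := by positivity
  -- key: for x, y in the lattice with integer data v, w: 2 * (x i * y i) = v i * w i
  have hprod : ∀ (x y : Fin n → ℝ) (v w : Fin n → ℤ),
      (∀ i, Real.sqrt 2 * x i = (v i : ℝ)) → (∀ i, Real.sqrt 2 * y i = (w i : ℝ)) →
      (2:ℝ) * ∑ i, x i * y i = ((∑ i, v i * w i : ℤ) : ℝ) := by
    intro x y v w hv hw
    push_cast
    rw [Finset.mul_sum]
    apply Finset.sum_congr rfl
    intro i _
    calc (2:ℝ) * (x i * y i) = (Real.sqrt 2 * Real.sqrt 2) * (x i * y i) := by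
            rw [hs2]
      _ = (Real.sqrt 2 * x i) * (Real.sqrt 2 * y i) := by ring
      _ = (v i : ℝ) * (w i : ℝ) := by rw [hv i, hw i]
  constructor
  · -- evenness
    rintro x ⟨v, hv, hvC⟩
    have h4 : (4:ℤ) ∣ ∑ i, v i * v i := by
      have h1 := sum_sq_sub_card v
      have h2 : (4:ℤ) ∣ ((Finset.univ.filter fun i => ((v i : ZMod 2)) ≠ 0).card : ℤ) := by
        have := hde _ hvC
        rw [wt] at this
        exact_mod_cast Int.natCast_dvd_natCast.mpr this
      have := dvd_add h1 h2
      simpa using this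
    obtain ⟨m, hm⟩ := h4
    refine ⟨m, ?_⟩
    have hr := hprod x x v v hv hv
    rw [hm] at hr
    push_cast at hr
    linarith
  · -- self-duality
    ext y
    constructor
    · rintro ⟨w, hw, hwC⟩ x ⟨v, hv, hvC⟩
      -- ∑ v w is even since C ⊆ C⊥
      have hdual : (fun i => ((v i : ZMod 2))) ∈ dualSet n C := by
        rw [← hsd]; exact hvC
      have hz : ((∑ i, v i * w i : ℤ) : ZMod 2) = 0 := by
        push_cast
        exact hdual _ hwC
      have h2 : (2:ℤ) ∣ ∑ i, v i * w i := (ZMod.intCast_zmod_eq_zero_iff_dvd _ 2).mp hz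
      obtain ⟨m, hm⟩ := h2
      refine ⟨m, ?_⟩
      have hr := hprod x y v w hv hw
      rw [hm] at hr
      push_cast at hr
      linarith
    · intro hy
      simp only [Set.mem_setOf_eq] at hy
      -- √2 e_j is in the lattice
      have hbasis : ∀ j : Fin n,
          (fun i => if i = j then Real.sqrt 2 else 0) ∈ latticeA n C := by
        intro j
        refine ⟨fun i => if i = j then 2 else 0, ?_, ?_⟩
        · intro i
          by_cases h : i = j <;> simp [h, hs2]
        · have : (fun i => (((if i = j then (2:ℤ) else 0) : ℤ) : ZMod 2)) = 0 := by
            funext i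
            by_cases h : i = j <;> simp [h] <;> decide
          rw [this]
          exact C.zero_mem
      have h1 : ∀ j : Fin n, ∃ m : ℤ, Real.sqrt 2 * y j = (m : ℝ) := by
        intro j
        obtain ⟨m, hm⟩ := hy _ (hbasis j)
        refine ⟨m, ?_⟩
        rw [← hm]
        rw [Finset.sum_eq_single j]
        · simp
        · intro i _ hij; simp [hij]
        · intro h; exact absurd (Finset.mem_univ j) h
      choose w hw using h1
      refine ⟨w, hw, ?_⟩
      show (fun i => ((w i : ZMod 2))) ∈ (C : Set (Fin n → ZMod 2))
      rw [hsd]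
      intro c hc
      -- lift c to integers
      set u : Fin n → ℤ := fun i => ((c i).val : ℤ) with hu_def
      have hu : ∀ i, ((u i : ZMod 2)) = c i := by
        intro i
        simp [hu_def, ZMod.natCast_val, ZMod.cast_id]
      have hxc : (fun i => (u i : ℝ) / Real.sqrt 2) ∈ latticeA n C := by
        refine ⟨u, fun i => by field_simp, ?_⟩
        have : (fun i => ((u i : ZMod 2))) = c := funext hu
        rw [this]; exact hc
      obtain ⟨m, hm⟩ := hy _ hxc
      have hr := hprod (fun i => (u i : ℝ) / Real.sqrt 2) y u w (fun i => by field_simp) hw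
      rw [hm] at hr
      have key : ∑ i, u i * w i = 2 * m := by
        have : ((∑ i, u i * w i : ℤ) : ℝ) = ((2 * m : ℤ) : ℝ) := by
          push_cast at hr ⊢; linarith
        exact_mod_cast this
      have hz : ((∑ i, u i * w i : ℤ) : ZMod 2) = 0 :=
        (ZMod.intCast_zmod_eq_zero_iff_dvd _ 2).mpr ⟨m, key⟩
      push_cast at hz
      calc ∑ i, ((w i : ZMod 2)) * c i = ∑ i, ((u i : ZMod 2)) * ((w i : ZMod 2)) := by
            apply Finset.sum_congr rfl
            intro i _
            rw [hu i, mul_comm]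
        _ = 0 := hz
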